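/- arXiv:1412.4436 — 5 statements merged into one kernel-verified Lean document; each statement's English description precedes it below -/
import Mathlib

section
/- For every k > 0 and every r > 0 there exist infinitely many natural numbers N such that any two distinct lattice points l, l' ∈ ℤ³ satisfying N − k ≤ |l|² ≤ N + k and N − k ≤ |l'|² ≤ N + k must satisfy |l − l'| > r; equivalently, (C^k_N − C^k_N) ∩ B_r = {0} for infinitely many N. -/
/-!
For every triple `(e, D, t)` with `|e| ≤ K`, `1 ≤ D ≤ R` and `|t| ≤ K + R` pick a different prime
`P ≡ -1 (mod 4 R!)`, and use the Chinese remainder theorem to find `N` (infinitely many of them)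
with `(N + e) D - t² ≡ P (mod P²)` for every triple. If `l ≠ l - d` both lie in the shell around `N`
and `|d|² ≤ R`, the triple `(|l|² - N, |d|², l ⬝ d)` shows that `P` divides the Gram determinant
`|l|² |d|² - (l ⬝ d)² = |l × d|²` exactly once. But `l × d ⊥ d`, and `-|d|²` is a non-residue
mod `P` by quadratic reciprocity (as `4 |d|² ∣ P + 1`), so `x ⬝ x` is anisotropic on `d^⊥` mod `P`.
Hence `P ∣ l × d` and `P² ∣ |l × d|²`, a contradiction.
-/

open Matrix Function
open scoped Nat NumberTheorySymbols

theorem eq_zero_of_isotropic_of_orthogonal {F : Type*} [Field F] {w e : Fin 3 → F}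
    (hww : w ⬝ᵥ w = 0) (hwe : w ⬝ᵥ e = 0) (he : ¬IsSquare (-(e ⬝ᵥ e))) : w = 0 := by
  have key : ∀ i, (w ⨯₃ e) i ^ 2 = -(e ⬝ᵥ e) * w i ^ 2 := by
    simp only [cross_apply, dotProduct, Fin.sum_univ_three] at hww hwe ⊢
    intro i
    fin_cases i <;> simp only [Fin.zero_eta, Fin.mk_one, Fin.reduceFinMk, cons_val_zero, cons_val_one,
      cons_val]
    · linear_combination (e 1 ^ 2 + e 2 ^ 2) * hww - (w 1 * e 1 + w 2 * e 2 - w 0 * e 0) * hwe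
    · linear_combination (e 0 ^ 2 + e 2 ^ 2) * hww - (w 0 * e 0 + w 2 * e 2 - w 1 * e 1) * hwe
    · linear_combination (e 0 ^ 2 + e 1 ^ 2) * hww - (w 0 * e 0 + w 1 * e 1 - w 2 * e 2) * hwe
  by_contra hw
  obtain ⟨i, hi⟩ := ne_iff.mp hw
  refine he ⟨(w ⨯₃ e) i / w i, ?_⟩
  rw [← sq, div_pow, key, mul_div_cancel_right₀ _ (pow_ne_zero 2 hi)]

theorem prime_sq_dvd_gram_of_dvd {P : ℕ} (hP : P.Prime) {l d : Fin 3 → ℤ}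
    (hd : ¬IsSquare (-((d ⬝ᵥ d : ℤ) : ZMod P)))
    (h : (P : ℤ) ∣ l ⬝ᵥ l * d ⬝ᵥ d - (l ⬝ᵥ d) ^ 2) :
    (P : ℤ) ^ 2 ∣ l ⬝ᵥ l * d ⬝ᵥ d - (l ⬝ᵥ d) ^ 2 := by
  have := Fact.mk hP
  let f := Int.castRingHom (ZMod P)
  have hgram : l ⬝ᵥ l * d ⬝ᵥ d - (l ⬝ᵥ d) ^ 2 = (l ⨯₃ d) ⬝ᵥ (l ⨯₃ d) := by
    rw [cross_dot_cross, dotProduct_comm d l, sq]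
  rw [hgram] at h ⊢
  have hc : f ∘ (l ⨯₃ d) = 0 := by
    refine eq_zero_of_isotropic_of_orthogonal (e := f ∘ d) ?_ ?_ ?_
    · rw [← RingHom.map_dotProduct]
      exact (ZMod.intCast_zmod_eq_zero_iff_dvd _ P).mpr h
    · rw [← RingHom.map_dotProduct, dotProduct_comm, dot_cross_self, map_zero]
    · rwa [← RingHom.map_dotProduct]
  have hdvd : ∀ i, (P : ℤ) ∣ (l ⨯₃ d) i := fun i =>
    (ZMod.intCast_zmod_eq_zero_iff_dvd _ P).mp (congrFun hc i)
  rw [sq]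
  exact Finset.dvd_sum fun i _ => mul_dvd_mul (hdvd i) (hdvd i)

theorem intCast_gram_ne_prime {P : ℕ} (hP : P.Prime) {l d : Fin 3 → ℤ}
    (hd : ¬IsSquare (-((d ⬝ᵥ d : ℤ) : ZMod P))) :
    ((l ⬝ᵥ l * d ⬝ᵥ d - (l ⬝ᵥ d) ^ 2 : ℤ) : ZMod (P ^ 2)) ≠ P := by
  intro h
  have hdvd : (P : ℤ) ^ 2 ∣ P - (l ⬝ᵥ l * d ⬝ᵥ d - (l ⬝ᵥ d) ^ 2) := by
    exact_mod_cast (ZMod.intCast_eq_intCast_iff_dvd_sub _ _ _).mp (by simpa using h)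
  have hgram : (P : ℤ) ^ 2 ∣ l ⬝ᵥ l * d ⬝ᵥ d - (l ⬝ᵥ d) ^ 2 := by
    refine prime_sq_dvd_gram_of_dvd hP hd ?_
    simpa using (dvd_refl (P : ℤ)).sub ((dvd_pow_self (P : ℤ) two_ne_zero).trans hdvd)
  have hPP : P ^ 2 ∣ P := by exact_mod_cast (by simpa using hgram.add hdvd : (P : ℤ) ^ 2 ∣ P)
  have := Nat.le_of_dvd hP.pos hPP
  nlinarith [hP.two_le]

theorem not_isSquare_neg_of_dvd_add_one {P D : ℕ} (hP : P.Prime) (hD : 0 < D)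
    (hPD : 4 * D ∣ P + 1) : ¬IsSquare (-(D : ZMod P)) := by
  have hP4 : P % 4 = 3 := by have := (dvd_mul_right 4 D).trans hPD; omega
  obtain ⟨b, hbD⟩ : ∃ b, b + 1 = 4 * D := ⟨4 * D - 1, by omega⟩
  have hb4 : b % 4 = 3 := by omega
  have hmod : P % (4 * D) = b := by
    obtain ⟨n, hn⟩ := hPD
    obtain ⟨n, rfl⟩ : ∃ m, n = m + 1 := ⟨n - 1, by rcases n with _ | n <;> simp_all⟩
    rw [show P = 4 * D * n + b by rw [mul_add_one] at hn; omega,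
      Nat.mul_add_mod, Nat.mod_eq_of_lt (by omega)]
  have hsq : J(2 ^ 2 | b) = 1 := by
    apply jacobiSym.sq_one'
    rw [← Nat.cast_ofNat, Int.gcd_natCast_natCast]
    exact Nat.coprime_two_left.mpr (Nat.odd_iff.mpr (by omega))
  have hJb : J(-(D : ℤ) | b) = -1 := calc
    J(-(D : ℤ) | b) = J(2 ^ 2 | b) * J(-(D : ℤ) | b) := by rw [hsq, one_mul]
    _ = J(-1 + b * (-1) | b) := by
      rw [← jacobiSym.mul_left]
      congr 1
      linear_combination (by exact_mod_cast hbD : (b : ℤ) + 1 = 4 * D)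
    _ = -1 := by
      rw [jacobiSym.mod_left, Int.add_mul_emod_self_left, ← jacobiSym.mod_left,
        jacobiSym.at_neg_one (Nat.odd_iff.mpr (by omega)), ZMod.χ₄_nat_three_mod_four hb4]
  have hJ : J(-(D : ℤ) | P) = -1 := by
    rw [jacobiSym.mod_right _ (hP.odd_of_ne_two (by omega)), Int.natAbs_neg, Int.natAbs_natCast,
      hmod, hJb]
  simpa using ZMod.nonsquare_of_jacobiSym_eq_neg_one hJ

theorem exists_injective_prime_dvd_add_one (ι : Type*) [Countable ι] {L : ℕ} (hL : L ≠ 0) :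
    ∃ p : ι → ℕ, Injective p ∧ ∀ j, (p j).Prime ∧ L ∣ p j + 1 := by
  have : NeZero L := ⟨hL⟩
  have hQ : {P : ℕ | P.Prime ∧ (P : ZMod L) = -1}.Infinite :=
    Nat.infinite_setOfPred_prime_and_eq_mod isUnit_one.neg
  obtain ⟨f, hf⟩ := Countable.exists_injective_nat ι
  let emb := hQ.natEmbedding
  refine ⟨fun j => emb (f j), fun j j' h => hf (emb.injective (Subtype.val_injective h)),
    fun j => ⟨(emb (f j)).2.1, ?_⟩⟩
  rw [← ZMod.natCast_eq_zero_iff, Nat.cast_add, (emb (f j)).2.2, Nat.cast_one, neg_add_cancel]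

theorem infinite_setOf_forall_natCast_eq {ι : Type*} (S : Finset ι) {s : ι → ℕ}
    (hs : ∀ i ∈ S, s i ≠ 0) (hcop : Set.Pairwise S (Nat.Coprime on s))
    (ρ : ∀ i, ZMod (s i)) :
    {N : ℕ | ∀ i ∈ S, (N : ZMod (s i)) = ρ i}.Infinite := by
  obtain ⟨c, hc⟩ := Nat.chineseRemainderOfFinset (fun i => (ρ i).val) s S hs hcop
  refine Set.infinite_of_forall_exists_gt fun n => ⟨c + (n + 1) * ∏ i ∈ S, s i, ?_, ?_⟩
  · intro i hi
    have : NeZero (s i) := ⟨hs i hi⟩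
    have hM : ((∏ j ∈ S, s j : ℕ) : ZMod (s i)) = 0 :=
      (ZMod.natCast_eq_zero_iff _ _).mpr (Finset.dvd_prod_of_mem s hi)
    rw [Nat.cast_add, Nat.cast_mul, hM, mul_zero, add_zero,
      (ZMod.natCast_eq_natCast_iff _ _ _).mpr (hc i hi), ZMod.natCast_zmod_val]
  · have : 0 < ∏ i ∈ S, s i := Finset.prod_pos fun i hi => Nat.pos_of_ne_zero (hs i hi)
    nlinarith

/-- For `N` in this class, `|l|² = N + e`, `|d|² = D`, `l ⬝ d = t` give
`|l|² |d|² - (l ⬝ d)² ≡ P (mod P²)`. -/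
def shellResidue (P D : ℕ) (e t : ℤ) : ZMod (P ^ 2) :=
  (D : ZMod (P ^ 2))⁻¹ * (P + t ^ 2) - e

theorem natCast_ne_shellResidue {P D : ℕ} (hP : P.Prime) {l d : Fin 3 → ℤ} (hD : d ⬝ᵥ d = D)
    (hsq : ¬IsSquare (-(D : ZMod P))) (N : ℕ) :
    (N : ZMod (P ^ 2)) ≠ shellResidue P D (l ⬝ᵥ l - N) (l ⬝ᵥ d) := by
  intro hN
  have hD_unit : IsUnit (D : ZMod (P ^ 2)) := by
    refine (ZMod.isUnit_natCast_iff_not_dvd_pow hP two_pos).mpr fun h => hsq ⟨0, ?_⟩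
    simp [(ZMod.natCast_eq_zero_iff D P).mpr h]
  have hl : ((l ⬝ᵥ l : ℤ) : ZMod (P ^ 2)) = (D : ZMod (P ^ 2))⁻¹ * (P + (l ⬝ᵥ d : ℤ) ^ 2) := by
    simp only [shellResidue, Int.cast_sub, Int.cast_natCast] at hN
    linear_combination hN
  refine intCast_gram_ne_prime hP (l := l) (by rwa [hD, Int.cast_natCast]) ?_
  rw [hD]
  push_cast
  rw [hl]
  linear_combination ((P : ZMod (P ^ 2)) + (l ⬝ᵥ d : ℤ) ^ 2) * ZMod.mul_inv_of_unit _ hD_unit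

theorem infinite_setOf_shell_separated (K R : ℕ) :
    {N : ℕ | ∀ l l' : Fin 3 → ℤ, |l ⬝ᵥ l - N| ≤ K → |l' ⬝ᵥ l' - N| ≤ K → l ≠ l' →
      (R : ℤ) < (l - l') ⬝ᵥ (l - l')}.Infinite := by
  obtain ⟨p, hp_inj, hp⟩ :=
    exists_injective_prime_dvd_add_one (ℤ × ℕ × ℤ) (L := 4 * R !) (by positivity)
  let S : Finset (ℤ × ℕ × ℤ) :=
    Finset.Icc (-K : ℤ) K ×ˢ Finset.Icc 1 R ×ˢ Finset.Icc (-(K + R) : ℤ) (K + R)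
  refine (infinite_setOf_forall_natCast_eq S (fun j _ => pow_ne_zero 2 (hp j).1.ne_zero)
    (fun j _ j' _ hne => Nat.Coprime.pow 2 2 ((Nat.coprime_primes (hp j).1 (hp j').1).mpr
      (hp_inj.ne hne))) fun j => shellResidue (p j) j.2.1 j.1 j.2.2).mono ?_
  intro N hN l l' hl hl' hne
  obtain ⟨d, rfl⟩ : ∃ d, l' = l - d := ⟨l - l', (sub_sub_cancel l l').symm⟩
  rw [sub_sub_cancel]
  by_contra! hR
  obtain ⟨D, hD⟩ : ∃ D : ℕ, d ⬝ᵥ d = D :=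
    Int.eq_ofNat_of_zero_le (Finset.sum_nonneg fun i _ => mul_self_nonneg (d i))
  have hD_pos : 0 < D := by
    have := dotProduct_self_eq_zero.not.mpr fun h : d = 0 => hne (by rw [h, sub_zero])
    omega
  have hl' : (l - d) ⬝ᵥ (l - d) = l ⬝ᵥ l - 2 * l ⬝ᵥ d + d ⬝ᵥ d := by
    simp only [sub_dotProduct, dotProduct_sub, dotProduct_comm d l]
    ring
  have hj : (l ⬝ᵥ l - N, D, l ⬝ᵥ d) ∈ S := by
    simp only [S, Finset.mem_product, Finset.mem_Icc]
    rw [abs_le] at *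
    omega
  have hP := (hp (l ⬝ᵥ l - N, D, l ⬝ᵥ d)).1
  refine natCast_ne_shellResidue hP hD (not_isSquare_neg_of_dvd_add_one hP hD_pos ?_) N (hN _ hj)
  exact (mul_dvd_mul_left 4 (Nat.dvd_factorial hD_pos (by omega))).trans (hp _).2

theorem mallet_paret_sell_lattice_lemma_general (k r : ℝ) :
    {N : ℕ | ∀ l l' : Fin 3 → ℤ,
      ((N : ℝ) - k ≤ ∑ i, (l i : ℝ) ^ 2 ∧ (∑ i, (l i : ℝ) ^ 2) ≤ (N : ℝ) + k) →
      ((N : ℝ) - k ≤ ∑ i, (l' i : ℝ) ^ 2 ∧ (∑ i, (l' i : ℝ) ^ 2) ≤ (N : ℝ) + k) →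
      l ≠ l' →
      r < Real.sqrt (∑ i, ((l i : ℝ) - (l' i : ℝ)) ^ 2)}.Infinite := by
  refine (infinite_setOf_shell_separated ⌈k⌉₊ ⌊r ^ 2⌋₊).mono fun N hN l l' hl hl' hne => ?_
  have hcast (v : Fin 3 → ℤ) : ((v ⬝ᵥ v : ℤ) : ℝ) = ∑ i, (v i : ℝ) ^ 2 := by
    simp [dotProduct, sq]
  have hshell (v : Fin 3 → ℤ)
      (hv : (N : ℝ) - k ≤ ∑ i, (v i : ℝ) ^ 2 ∧ ∑ i, (v i : ℝ) ^ 2 ≤ N + k) :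
      |v ⬝ᵥ v - N| ≤ ⌈k⌉₊ := by
    have hk := Nat.le_ceil k
    have : |((v ⬝ᵥ v - N : ℤ) : ℝ)| ≤ ((⌈k⌉₊ : ℤ) : ℝ) := by
      push_cast [hcast, abs_le]
      constructor <;> linarith
    exact_mod_cast this
  have hsep : ((⌊r ^ 2⌋₊ + 1 : ℤ) : ℝ) ≤ (((l - l') ⬝ᵥ (l - l') : ℤ) : ℝ) :=
    Int.cast_le.mpr (hN l l' (hshell l hl) (hshell l' hl') hne)
  push_cast [hcast, Pi.sub_apply] at hsep
  exact Real.lt_sqrt_of_sq_lt (by linarith [Nat.lt_floor_add_one (r ^ 2)])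

/-- The Mallet-Paret–Sell lattice lemma: for every `k > 0` and `r > 0` there are
infinitely many `N : ℕ` such that any two distinct lattice points `l, l'` of `ℤ³`
in the spherical shell `N - k ≤ |l|² ≤ N + k` satisfy `|l - l'| > r`. -/
theorem mallet_paret_sell_lattice_lemma (k r : ℝ) (hk : 0 < k) (hr : 0 < r) :
    {N : ℕ | ∀ l l' : Fin 3 → ℤ,
      ((N : ℝ) - k ≤ ∑ i, (l i : ℝ) ^ 2 ∧ (∑ i, (l i : ℝ) ^ 2) ≤ (N : ℝ) + k) →
      ((N : ℝ) - k ≤ ∑ i, (l' i : ℝ) ^ 2 ∧ (∑ i, (l' i : ℝ) ^ 2) ≤ (N : ℝ) + k) →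
      l ≠ l' →
      r < Real.sqrt (∑ i, ((l i : ℝ) - (l' i : ℝ)) ^ 2)}.Infinite :=
  mallet_paret_sell_lattice_lemma_general k r
end

section
/- Let E be a real inner product space, λ > 0, and A : E → E a continuous linear map such that ⟨Av, v⟩ ≥ 0 and ‖Av‖ ≤ λ‖v‖ for all v ∈ E. Let φ : ℝ → ℝ be differentiable with 0 ≤ φ(η) ≤ 1, φ'(η) ≤ 0, and (1/2)φ(η) + η φ'(η) ≥ 0 for all η ≥ 0. Then for all u, v ∈ E: 2 φ'(‖Au‖²) ⟨Au, Av⟩ ⟨Au, v⟩ + φ(‖Au‖²) ⟨Av, v⟩ ≤ (1/2)(λ‖v‖² + ⟨Av, v⟩). -/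
open RealInnerProductSpace

/-- Polarization-type bound without rescaling. -/
lemma inner_mul_inner_ge_aux {E : Type*} [NormedAddCommGroup E]
    [InnerProductSpace ℝ E] (w a b : E) :
    -((1/4) * ‖a - b‖ ^ 2 * ‖w‖ ^ 2) ≤ ⟪w, a⟫ * ⟪w, b⟫ := by
  have h1 : ⟪w, a⟫ * ⟪w, b⟫ = (1/4) * (⟪w, a + b⟫ ^ 2 - ⟪w, a - b⟫ ^ 2) := by
    simp only [inner_add_right, inner_sub_right]
    ring
  have h2 : |⟪w, a - b⟫| ≤ ‖w‖ * ‖a - b‖ := abs_real_inner_le_norm w (a - b)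
  have h3 : ⟪w, a - b⟫ ^ 2 ≤ (‖w‖ * ‖a - b‖) ^ 2 := by
    rw [← sq_abs]
    exact pow_le_pow_left₀ (abs_nonneg _) h2 2
  nlinarith [sq_nonneg ⟪w, a + b⟫]

/-- The sharp lower bound `⟪w,a⟫⟪w,b⟫ ≥ (‖w‖²/2)(⟪a,b⟫ - ‖a‖‖b‖)`. -/
lemma inner_mul_inner_ge {E : Type*} [NormedAddCommGroup E]
    [InnerProductSpace ℝ E] (w a b : E) :
    ‖w‖ ^ 2 / 2 * (⟪a, b⟫ - ‖a‖ * ‖b‖) ≤ ⟪w, a⟫ * ⟪w, b⟫ := by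
  rcases eq_or_ne a 0 with rfl | ha
  · simp
  rcases eq_or_ne b 0 with rfl | hb
  · simp
  have hna : (0:ℝ) < ‖a‖ := norm_pos_iff.mpr ha
  have hnb : (0:ℝ) < ‖b‖ := norm_pos_iff.mpr hb
  set s : ℝ := Real.sqrt (‖b‖ / ‖a‖) with hs
  have hspos : 0 < s := Real.sqrt_pos.mpr (div_pos hnb hna)
  have hs2 : s ^ 2 = ‖b‖ / ‖a‖ := Real.sq_sqrt (le_of_lt (div_pos hnb hna))
  have key := inner_mul_inner_ge_aux w (s • a) (s⁻¹ • b)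
  have hinner : ⟪w, s • a⟫ * ⟪w, s⁻¹ • b⟫ = ⟪w, a⟫ * ⟪w, b⟫ := by
    rw [real_inner_smul_right, real_inner_smul_right]
    field_simp
  have hnorm : ‖s • a - s⁻¹ • b‖ ^ 2 = 2 * (‖a‖ * ‖b‖) - 2 * ⟪a, b⟫ := by
    rw [@norm_sub_sq_real]
    rw [norm_smul, norm_smul, real_inner_smul_left, real_inner_smul_right]
    have h1 : (‖(s:ℝ)‖ * ‖a‖) ^ 2 = s ^ 2 * ‖a‖ ^ 2 := by
      rw [Real.norm_eq_abs, mul_pow, sq_abs]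
    have h2 : (‖(s⁻¹:ℝ)‖ * ‖b‖) ^ 2 = (s ^ 2)⁻¹ * ‖b‖ ^ 2 := by
      rw [Real.norm_eq_abs, mul_pow, sq_abs, inv_pow]
    rw [h1, h2, hs2]
    have hss : s * (s⁻¹ * ⟪a, b⟫) = ⟪a, b⟫ := by
      field_simp
    rw [hss]
    field_simp
    ring
  rw [hinner, hnorm] at key
  nlinarith
/-- The cut-off estimate `(T'(u)v, v) ≤ (1/2)(λ‖v‖² + (Av,v))` for
`T(u) = φ(‖Au‖²)Au`, where `A` is a nonnegative bounded operator with
`‖Av‖ ≤ λ‖v‖` and `φ` is a cut-off function with `φ' ≤ 0` and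
`(1/2)φ(η) + ηφ'(η) ≥ 0`. -/
theorem cutoff_derivative_estimate {E : Type*} [NormedAddCommGroup E]
    [InnerProductSpace ℝ E] (lam : ℝ) (hlam : 0 < lam)
    (A : E →L[ℝ] E)
    (hA_pos : ∀ v : E, 0 ≤ ⟪A v, v⟫)
    (hA_bound : ∀ v : E, ‖A v‖ ≤ lam * ‖v‖)
    (φ : ℝ → ℝ) (hφ_diff : Differentiable ℝ φ)
    (hφ_nonneg : ∀ η : ℝ, 0 ≤ η → 0 ≤ φ η)
    (hφ_le_one : ∀ η : ℝ, 0 ≤ η → φ η ≤ 1)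
    (hφ'_nonpos : ∀ η : ℝ, 0 ≤ η → deriv φ η ≤ 0)
    (hφ_comb : ∀ η : ℝ, 0 ≤ η → 0 ≤ (1 / 2) * φ η + η * deriv φ η)
    (u v : E) :
    2 * deriv φ (‖A u‖ ^ 2) * ⟪A u, A v⟫ * ⟪A u, v⟫ + φ (‖A u‖ ^ 2) * ⟪A v, v⟫
      ≤ (1 / 2) * (lam * ‖v‖ ^ 2 + ⟪A v, v⟫) := by
  set η : ℝ := ‖A u‖ ^ 2 with hη
  have hη0 : 0 ≤ η := sq_nonneg _
  set p : ℝ := φ η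
  set q : ℝ := deriv φ η
  have hp0 : 0 ≤ p := hφ_nonneg η hη0
  have hp1 : p ≤ 1 := hφ_le_one η hη0
  have hq : q ≤ 0 := hφ'_nonpos η hη0
  have hcomb : 0 ≤ (1/2) * p + η * q := hφ_comb η hη0
  have hc : 0 ≤ ⟪A v, v⟫ := hA_pos v
  have hcs : ⟪A v, v⟫ ≤ ‖A v‖ * ‖v‖ := real_inner_le_norm (A v) v
  have hAv : ‖A v‖ ≤ lam * ‖v‖ := hA_bound v
  have hv0 : (0:ℝ) ≤ ‖v‖ := norm_nonneg v
  have hAv0 : (0:ℝ) ≤ ‖A v‖ := norm_nonneg (A v)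
  have key : η / 2 * (⟪A v, v⟫ - ‖A v‖ * ‖v‖) ≤ ⟪A u, A v⟫ * ⟪A u, v⟫ := by
    have := inner_mul_inner_ge (A u) (A v) v
    simpa [hη] using this
  have hD : ‖A v‖ * ‖v‖ ≤ lam * ‖v‖ ^ 2 := by nlinarith
  nlinarith [mul_nonpos_of_nonpos_of_nonneg hq (sub_nonneg.mpr (le_trans hcs hD)),
    mul_le_mul_of_nonpos_left key hq, sq_nonneg ‖v‖]
end

section
/- Let (λ_n)_{n≥1} be a nondecreasing sequence of positive real numbers, let N ≥ 1 and L ≥ 0 satisfy the spectral gap condition λ_{N+1} − λ_N > L. Let w, g : {1, 2, ...} → ℝ be square-summable sequences such that Σ_n λ_n w_n² < ∞ and Σ_n g_n² ≤ L² Σ_n w_n². Then 2(Σ_{n≤N} g_n w_n − Σ_{n>N} g_n w_n) + 2(Σ_{n≤N} λ_n w_n² − Σ_{n>N} λ_n w_n²) + 2 λ_N λ_{N+1} (Σ_{n>N} w_n²/λ_n − Σ_{n≤N} w_n²/λ_n) ≤ −2(λ_{N+1} − λ_N − L) Σ_n w_n². -/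
/-- The spectral gap condition `λ_{N+1} − λ_N > L` implies the strong cone condition,
in pointwise Fourier-coordinate form: with `α = 2λ_N λ_{N+1}`,
`−2(g, w₋−w₊) − 2(Aw, w₋−w₊) + α(‖w₋‖²_{H^{-1}} − ‖w₊‖²_{H^{-1}}) ≤ −2(λ_{N+1}−λ_N−L)‖w‖²`,
whenever `‖g‖ ≤ L‖w‖`. -/
theorem spectral_gap_implies_strong_cone (lam : ℕ+ → ℝ)
    (hpos : ∀ n, 0 < lam n) (hmono : Monotone lam)
    (N : ℕ+) (L : ℝ) (hL : 0 ≤ L) (hgap : L < lam (N + 1) - lam N)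
    (w g : ℕ+ → ℝ)
    (hw2 : Summable fun n => w n ^ 2)
    (hwlam : Summable fun n => lam n * w n ^ 2)
    (hg2 : Summable fun n => g n ^ 2)
    (hgw : (∑' n, g n ^ 2) ≤ L ^ 2 * ∑' n, w n ^ 2) :
    2 * ((∑' n, if n ≤ N then g n * w n else 0)
          - (∑' n, if N < n then g n * w n else 0))
      + 2 * ((∑' n, if n ≤ N then lam n * w n ^ 2 else 0)
          - (∑' n, if N < n then lam n * w n ^ 2 else 0))
      + 2 * lam N * lam (N + 1) *
          ((∑' n, if N < n then w n ^ 2 / lam n else 0)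
            - (∑' n, if n ≤ N then w n ^ 2 / lam n else 0))
      ≤ -2 * (lam (N + 1) - lam N - L) * ∑' n, w n ^ 2 := by
  have hlNpos : 0 < lam N := hpos N
  have hl1pos : 0 < lam (N + 1) := hpos (N + 1)
  have hNlt : N < N + 1 := PNat.lt_add_right N 1
  have h1N : lam N ≤ lam (N + 1) := hmono hNlt.le
  -- summability of g*w
  have hgw_sum : Summable fun n => g n * w n := by
    apply Summable.of_abs
    apply Summable.of_nonneg_of_le (fun n => abs_nonneg _) _ (hg2.add hw2)
    intro n
    have h := sq_nonneg (|g n| - |w n|)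
    have : |g n * w n| = |g n| * |w n| := abs_mul _ _
    nlinarith [sq_abs (g n), sq_abs (w n)]
  -- summability of w^2 / lam
  have hwinv : Summable fun n => w n ^ 2 / lam n := by
    apply Summable.of_nonneg_of_le (fun n => div_nonneg (sq_nonneg _) (hpos n).le)
      (f := fun n => w n ^ 2 / lam 1) _ (hw2.div_const (lam 1))
    intro n
    exact div_le_div_of_nonneg_left (sq_nonneg _) (hpos 1) (hmono n.one_le)
  -- indicator summability helper
  have hind : ∀ (p : ℕ+ → Prop) (_ : DecidablePred p) (f : ℕ+ → ℝ), Summable f →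
      Summable (fun n => if p n then f n else 0) := by
    intro p hp f hf
    refine (hf.indicator {n | p n}).congr fun n => ?_
    simp [Set.indicator_apply, Set.mem_setOf_eq]
  have hsp1 := hind (fun n => n ≤ N) inferInstance _ hgw_sum
  have hsm1 := hind (fun n => N < n) inferInstance _ hgw_sum
  have hsp2 := hind (fun n => n ≤ N) inferInstance _ hwlam
  have hsm2 := hind (fun n => N < n) inferInstance _ hwlam
  have hsp3 := hind (fun n => n ≤ N) inferInstance _ hwinv
  have hsm3 := hind (fun n => N < n) inferInstance _ hwinv
  -- the inverse-of-L constant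
  set Linv : ℝ := if L = 0 then 0 else L⁻¹ with hLinv
  have hg0 : L = 0 → ∀ n, g n = 0 := by
    intro h n
    have h1 : (∑' n, g n ^ 2) = 0 := by
      refine le_antisymm ?_ (tsum_nonneg fun _ => sq_nonneg _)
      simpa [h] using hgw
    have h2 : g n ^ 2 ≤ 0 := by
      have := Summable.le_tsum hg2 n (fun j _ => sq_nonneg _)
      linarith [this, h1.le]
    have : g n ^ 2 = 0 := le_antisymm h2 (sq_nonneg _)
    exact pow_eq_zero_iff (by norm_num) |>.mp this
  have hAM : ∀ n, 2 * |g n * w n| ≤ Linv * g n ^ 2 + L * w n ^ 2 := by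
    intro n
    by_cases h : L = 0
    · simp [hLinv, h, hg0 h n]
    · have hLpos : 0 < L := lt_of_le_of_ne hL (Ne.symm h)
      have h2 : 2 * |g n * w n| * L ≤ g n ^ 2 + L ^ 2 * w n ^ 2 := by
        nlinarith [sq_nonneg (|g n| - L * |w n|), abs_mul (g n) (w n),
          sq_abs (g n), sq_abs (w n), abs_nonneg (g n), abs_nonneg (w n), hLpos]
      have h3 : 2 * |g n * w n| ≤ (g n ^ 2 + L ^ 2 * w n ^ 2) / L :=
        (le_div_iff₀ hLpos).mpr h2
      calc 2 * |g n * w n| ≤ (g n ^ 2 + L ^ 2 * w n ^ 2) / L := h3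
        _ = Linv * g n ^ 2 + L * w n ^ 2 := by
            simp only [hLinv, if_neg h]; field_simp
  -- pointwise lambda bounds
  have hlam_le : ∀ n, n ≤ N → 2 * (lam n * w n ^ 2) - 2 * lam N * lam (N + 1) * (w n ^ 2 / lam n)
      ≤ -2 * (lam (N + 1) - lam N) * w n ^ 2 := by
    intro n hn
    have hx : lam n ≤ lam N := hmono hn
    have hd : lam n * (w n ^ 2 / lam n) = w n ^ 2 :=
      mul_div_cancel₀ _ (hpos n).ne'
    have hd1 : lam (N + 1) * (lam n * (w n ^ 2 / lam n)) = lam (N + 1) * w n ^ 2 := by rw [hd]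
    have hdnn : 0 ≤ w n ^ 2 / lam n := div_nonneg (sq_nonneg _) (hpos n).le
    nlinarith [mul_nonneg (sub_nonneg.mpr hx) (sq_nonneg (w n)),
      mul_nonneg (mul_nonneg hl1pos.le (sub_nonneg.mpr hx)) hdnn, hd1]
  have hlam_gt : ∀ n, N < n → -(2 * (lam n * w n ^ 2)) + 2 * lam N * lam (N + 1) * (w n ^ 2 / lam n)
      ≤ -2 * (lam (N + 1) - lam N) * w n ^ 2 := by
    intro n hn
    have hn' : N + 1 ≤ n := hn
    have hx : lam (N + 1) ≤ lam n := hmono hn'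
    have hd : lam n * (w n ^ 2 / lam n) = w n ^ 2 :=
      mul_div_cancel₀ _ (hpos n).ne'
    have hd1 : lam N * (lam n * (w n ^ 2 / lam n)) = lam N * w n ^ 2 := by rw [hd]
    have hdnn : 0 ≤ w n ^ 2 / lam n := div_nonneg (sq_nonneg _) (hpos n).le
    nlinarith [mul_nonneg (sub_nonneg.mpr hx) (sq_nonneg (w n)),
      mul_nonneg (mul_nonneg hlNpos.le (sub_nonneg.mpr hx)) hdnn, hd1]
  -- combine all tsums into one
  rw [← (Summable.tsum_sub hsp1 hsm1), ← (Summable.tsum_sub hsp2 hsm2), ← (Summable.tsum_sub hsm3 hsp3),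
    ← tsum_mul_left, ← tsum_mul_left, ← tsum_mul_left,
    ← Summable.tsum_add ((hsp1.sub hsm1).mul_left 2) ((hsp2.sub hsm2).mul_left 2),
    ← Summable.tsum_add (((hsp1.sub hsm1).mul_left 2).add ((hsp2.sub hsm2).mul_left 2))
      ((hsm3.sub hsp3).mul_left (2 * lam N * lam (N + 1)))]
  -- compare with the majorant
  have hPsi : Summable fun n => Linv * g n ^ 2 + (L - 2 * (lam (N + 1) - lam N)) * w n ^ 2 :=
    (hg2.mul_left _).add (hw2.mul_left _)
  have hstep : (∑' n, (2 * ((if n ≤ N then g n * w n else 0) - (if N < n then g n * w n else 0))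
        + 2 * ((if n ≤ N then lam n * w n ^ 2 else 0) - (if N < n then lam n * w n ^ 2 else 0))
        + 2 * lam N * lam (N + 1) *
          ((if N < n then w n ^ 2 / lam n else 0) - (if n ≤ N then w n ^ 2 / lam n else 0))))
      ≤ ∑' n, (Linv * g n ^ 2 + (L - 2 * (lam (N + 1) - lam N)) * w n ^ 2) := by
    refine Summable.tsum_le_tsum (fun n => ?_) ?_ hPsi
    · by_cases hn : n ≤ N
      · simp only [if_pos hn, if_neg (not_lt.mpr hn)]
        have h1 : 2 * (g n * w n) ≤ Linv * g n ^ 2 + L * w n ^ 2 :=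
          le_trans (by have := le_abs_self (g n * w n); linarith) (hAM n)
        have h2 := hlam_le n hn
        nlinarith [h1, h2]
      · have hn' : N < n := not_le.mp hn
        simp only [if_neg hn, if_pos hn']
        have h1 : -(2 * (g n * w n)) ≤ Linv * g n ^ 2 + L * w n ^ 2 :=
          le_trans (by have := neg_abs_le (g n * w n); linarith) (hAM n)
        have h2 := hlam_gt n hn'
        nlinarith [h1, h2]
    · exact (((hsp1.sub hsm1).mul_left 2).add ((hsp2.sub hsm2).mul_left 2)).add
        ((hsm3.sub hsp3).mul_left (2 * lam N * lam (N + 1)))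
  refine hstep.trans ?_
  rw [Summable.tsum_add (hg2.mul_left Linv) (hw2.mul_left _), tsum_mul_left, tsum_mul_left]
  have hfin : Linv * ∑' n, g n ^ 2 ≤ L * ∑' n, w n ^ 2 := by
    by_cases h : L = 0
    · simp [hLinv, h]
    · have hLpos : 0 < L := lt_of_le_of_ne hL (Ne.symm h)
      have := mul_le_mul_of_nonneg_left hgw (inv_nonneg.mpr hLpos.le)
      calc Linv * ∑' n, g n ^ 2 = L⁻¹ * ∑' n, g n ^ 2 := by rw [hLinv, if_neg h]
        _ ≤ L⁻¹ * (L ^ 2 * ∑' n, w n ^ 2) := this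
        _ = L * ∑' n, w n ^ 2 := by field_simp
  nlinarith [hfin]
end

section
/- Let k, r > 0, N ∈ ℕ, and C := {l ∈ ℤ³ : N − k ≤ |l|² ≤ N + k}, and assume that any two distinct elements l, l' ∈ C satisfy |l − l'| > r. Let a : ℤ³ → ℂ be absolutely summable and let b : ℤ³ → ℂ vanish outside C. Then (Σ_{m∈C} |Σ_{l∈ℤ³} a_{m−l} b_l − a_0 b_m|²)^{1/2} ≤ (Σ_{l∈ℤ³, |l| > r} |a_l|) · (Σ_{l∈ℤ³} |b_l|²)^{1/2}. -/
open scoped Classical in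
/-- Quantitative spatial averaging estimate: on a separated spectral shell
`C = C^k_N ⊂ ℤ³`, multiplication (convolution) by `a` differs on the band `C`
from multiplication by the scalar `a₀` by at most the `ℓ¹` norm of the high
modes `|l| > r` of `a`, in `ℓ²` operator norm. -/
theorem spatial_averaging_estimate (k r : ℝ) (N : ℕ)
    (hk : 0 < k) (hr : 0 < r)
    (C : Set (Fin 3 → ℤ))
    (hC : C = {l : Fin 3 → ℤ |
      (N : ℝ) - k ≤ ∑ i, (l i : ℝ) ^ 2 ∧ (∑ i, (l i : ℝ) ^ 2) ≤ (N : ℝ) + k})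
    (hsep : ∀ l ∈ C, ∀ l' ∈ C, l ≠ l' →
      r < Real.sqrt (∑ i, ((l i : ℝ) - (l' i : ℝ)) ^ 2))
    (a b : (Fin 3 → ℤ) → ℂ)
    (ha : Summable fun l => ‖a l‖)
    (hb : ∀ l, l ∉ C → b l = 0) :
    Real.sqrt (∑' m : Fin 3 → ℤ,
        if m ∈ C then ‖(∑' l : Fin 3 → ℤ, a (m - l) * b l) - a 0 * b m‖ ^ 2 else 0)
      ≤ (∑' l : Fin 3 → ℤ,
            if r < Real.sqrt (∑ i, (l i : ℝ) ^ 2) then ‖a l‖ else 0)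
          * Real.sqrt (∑' l : Fin 3 → ℤ, ‖b l‖ ^ 2) := by
  classical
  set w : (Fin 3 → ℤ) → ℝ :=
    fun l => if r < Real.sqrt (∑ i, (l i : ℝ) ^ 2) then ‖a l‖ else 0 with hwdef
  have hw0 : ∀ l, 0 ≤ w l := by
    intro l; simp only [hwdef]; split <;> positivity
  have hwle : ∀ l, w l ≤ ‖a l‖ := by
    intro l; simp only [hwdef]; split
    · exact le_rfl
    · exact norm_nonneg _
  have hwsum : Summable w := Summable.of_nonneg_of_le hw0 hwle ha
  set A := ∑' l, w l with hAdef
  have hA0 : 0 ≤ A := tsum_nonneg hw0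
  -- C is finite
  have hCfin : C.Finite := by
    have hsub : C ⊆ (Set.univ : Set (Fin 3)).pi
        (fun _ => Set.Icc (-(⌈(N : ℝ) + k + 1⌉)) ⌈(N : ℝ) + k + 1⌉) := by
      intro l hl
      rw [hC] at hl
      intro i _
      have h1 : (l i : ℝ) ^ 2 ≤ (N : ℝ) + k :=
        le_trans (Finset.single_le_sum (fun j _ => sq_nonneg ((l j : ℝ)))
          (Finset.mem_univ i)) hl.2
      have h2 : |(l i : ℝ)| ≤ (N : ℝ) + k + 1 := by
        nlinarith [sq_nonneg (|(l i : ℝ)| - 1), sq_abs ((l i : ℝ)), abs_nonneg ((l i : ℝ))]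
      have h3 : ((|l i| : ℤ) : ℝ) ≤ ((⌈(N : ℝ) + k + 1⌉ : ℤ) : ℝ) := by
        push_cast
        exact le_trans h2 (Int.le_ceil _)
      have h4 : |l i| ≤ ⌈(N : ℝ) + k + 1⌉ := by exact_mod_cast h3
      exact Set.mem_Icc.mpr (abs_le.mp h4)
    exact Set.Finite.subset (Set.Finite.pi fun _ => Set.finite_Icc _ _) hsub
  set Cf := hCfin.toFinset with hCfdef
  have hmem : ∀ l, l ∈ Cf ↔ l ∈ C := fun l => hCfin.mem_toFinset
  -- rewrite the LHS tsum as a finite sum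
  have hLHS : (∑' m : Fin 3 → ℤ,
      if m ∈ C then ‖(∑' l : Fin 3 → ℤ, a (m - l) * b l) - a 0 * b m‖ ^ 2 else 0)
      = ∑ m ∈ Cf, ‖∑ l ∈ Cf.erase m, a (m - l) * b l‖ ^ 2 := by
    rw [tsum_eq_sum (s := Cf)
      (fun m hm => if_neg (fun h => hm ((hmem m).mpr h)))]
    refine Finset.sum_congr rfl fun m hm => ?_
    rw [if_pos ((hmem m).mp hm)]
    congr 1
    have h1 : (∑' l : Fin 3 → ℤ, a (m - l) * b l) = ∑ l ∈ Cf, a (m - l) * b l :=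
      tsum_eq_sum (fun l hl => by rw [hb l (fun h => hl ((hmem l).mpr h)), mul_zero])
    rw [h1, ← Finset.add_sum_erase _ _ hm, sub_self, add_sub_cancel_left]
  -- Schur row/column bounds
  have hrow : ∀ (m : Fin 3 → ℤ) (s : Finset (Fin 3 → ℤ)), (∑ l ∈ s, w (m - l)) ≤ A := by
    intro m s
    have hinj : ∀ x ∈ s, ∀ y ∈ s, m - x = m - y → x = y := by
      intro x _ y _ h
      exact sub_right_injective h
    calc ∑ l ∈ s, w (m - l) = ∑ x ∈ s.image (fun l => m - l), w x :=
          (Finset.sum_image hinj).symm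
      _ ≤ A := Summable.sum_le_tsum _ (fun x _ => hw0 x) hwsum
  have hcol : ∀ (l : Fin 3 → ℤ) (s : Finset (Fin 3 → ℤ)), (∑ m ∈ s, w (m - l)) ≤ A := by
    intro l s
    have hinj : ∀ x ∈ s, ∀ y ∈ s, x - l = y - l → x = y := by
      intro x _ y _ h
      exact sub_left_injective h
    calc ∑ m ∈ s, w (m - l) = ∑ x ∈ s.image (fun m => m - l), w x :=
          (Finset.sum_image hinj).symm
      _ ≤ A := Summable.sum_le_tsum _ (fun x _ => hw0 x) hwsum
  -- pointwise Cauchy–Schwarz bound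
  have hterm : ∀ m ∈ Cf, ‖∑ l ∈ Cf.erase m, a (m - l) * b l‖ ^ 2
      ≤ A * ∑ l ∈ Cf.erase m, w (m - l) * ‖b l‖ ^ 2 := by
    intro m hm
    have hwa : ∀ l ∈ Cf.erase m, ‖a (m - l)‖ = w (m - l) := by
      intro l hl
      have hlm : l ≠ m := Finset.ne_of_mem_erase hl
      have hlC : l ∈ C := (hmem l).mp (Finset.mem_of_mem_erase hl)
      have hmC : m ∈ C := (hmem m).mp hm
      have hsep' := hsep m hmC l hlC (fun h => hlm h.symm)
      have hR : r < Real.sqrt (∑ i, (((m - l) i : ℤ) : ℝ) ^ 2) := by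
        have he : ∑ i, (((m - l) i : ℤ) : ℝ) ^ 2 = ∑ i, ((m i : ℝ) - (l i : ℝ)) ^ 2 := by
          refine Finset.sum_congr rfl fun i _ => ?_
          simp [Pi.sub_apply]
        rw [he]; exact hsep'
      simp only [hwdef]
      rw [if_pos hR]
    have h1 : ‖∑ l ∈ Cf.erase m, a (m - l) * b l‖
        ≤ ∑ l ∈ Cf.erase m, w (m - l) * ‖b l‖ := by
      refine le_trans (norm_sum_le _ _) (le_of_eq (Finset.sum_congr rfl fun l hl => ?_))
      rw [norm_mul, hwa l hl]
    have h2 : (∑ l ∈ Cf.erase m, w (m - l) * ‖b l‖) ^ 2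
        ≤ (∑ l ∈ Cf.erase m, w (m - l)) * ∑ l ∈ Cf.erase m, w (m - l) * ‖b l‖ ^ 2 := by
      have hcs := Finset.sum_mul_sq_le_sq_mul_sq (Cf.erase m)
        (fun l => Real.sqrt (w (m - l))) (fun l => Real.sqrt (w (m - l)) * ‖b l‖)
      have e1 : ∀ l, Real.sqrt (w (m - l)) * (Real.sqrt (w (m - l)) * ‖b l‖)
          = w (m - l) * ‖b l‖ := fun l => by
        rw [← mul_assoc, Real.mul_self_sqrt (hw0 _)]
      have e2 : ∀ l, Real.sqrt (w (m - l)) ^ 2 = w (m - l) := fun l => Real.sq_sqrt (hw0 _)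
      have e3 : ∀ l, (Real.sqrt (w (m - l)) * ‖b l‖) ^ 2 = w (m - l) * ‖b l‖ ^ 2 := fun l => by
        rw [mul_pow, e2]
      simpa only [e1, e2, e3] using hcs
    calc ‖∑ l ∈ Cf.erase m, a (m - l) * b l‖ ^ 2
        ≤ (∑ l ∈ Cf.erase m, w (m - l) * ‖b l‖) ^ 2 := by
          exact pow_le_pow_left₀ (norm_nonneg _) h1 2
      _ ≤ (∑ l ∈ Cf.erase m, w (m - l)) * ∑ l ∈ Cf.erase m, w (m - l) * ‖b l‖ ^ 2 := h2
      _ ≤ A * ∑ l ∈ Cf.erase m, w (m - l) * ‖b l‖ ^ 2 := by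
          refine mul_le_mul_of_nonneg_right (hrow m _) (Finset.sum_nonneg fun l _ => ?_)
          exact mul_nonneg (hw0 _) (sq_nonneg _)
  -- summation swap
  have hswap : ∑ m ∈ Cf, ∑ l ∈ Cf.erase m, w (m - l) * ‖b l‖ ^ 2
      ≤ A * ∑ l ∈ Cf, ‖b l‖ ^ 2 := by
    have hG : ∀ m ∈ Cf, ∑ l ∈ Cf.erase m, w (m - l) * ‖b l‖ ^ 2
        = ∑ l ∈ Cf, if l = m then 0 else w (m - l) * ‖b l‖ ^ 2 := by
      intro m hm
      rw [← Finset.sum_erase (s := Cf) (a := m)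
        (f := fun l => if l = m then 0 else w (m - l) * ‖b l‖ ^ 2) (by simp)]
      refine Finset.sum_congr rfl fun l hl => ?_
      rw [if_neg (Finset.ne_of_mem_erase hl)]
    calc ∑ m ∈ Cf, ∑ l ∈ Cf.erase m, w (m - l) * ‖b l‖ ^ 2
        = ∑ m ∈ Cf, ∑ l ∈ Cf, (if l = m then 0 else w (m - l) * ‖b l‖ ^ 2) :=
          Finset.sum_congr rfl hG
      _ = ∑ l ∈ Cf, ∑ m ∈ Cf, (if l = m then 0 else w (m - l) * ‖b l‖ ^ 2) :=
          Finset.sum_comm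
      _ = ∑ l ∈ Cf, ∑ m ∈ Cf.erase l, w (m - l) * ‖b l‖ ^ 2 := by
          refine Finset.sum_congr rfl fun l hl => ?_
          rw [← Finset.sum_erase (s := Cf) (a := l)
            (f := fun m => if l = m then 0 else w (m - l) * ‖b l‖ ^ 2) (by simp)]
          refine Finset.sum_congr rfl fun m hm => ?_
          rw [if_neg (Ne.symm (Finset.ne_of_mem_erase hm))]
      _ ≤ ∑ l ∈ Cf, A * ‖b l‖ ^ 2 := by
          refine Finset.sum_le_sum fun l hl => ?_
          rw [← Finset.sum_mul]
          exact mul_le_mul_of_nonneg_right (hcol l _) (sq_nonneg _)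
      _ = A * ∑ l ∈ Cf, ‖b l‖ ^ 2 := (Finset.mul_sum _ _ _).symm
  -- put things together
  have hB2 : (∑' l : Fin 3 → ℤ, ‖b l‖ ^ 2) = ∑ l ∈ Cf, ‖b l‖ ^ 2 :=
    tsum_eq_sum (fun l hl => by rw [hb l (fun h => hl ((hmem l).mpr h))]; simp)
  have hB2nn : (0 : ℝ) ≤ ∑ l ∈ Cf, ‖b l‖ ^ 2 := Finset.sum_nonneg fun l _ => sq_nonneg _
  have hmain : ∑ m ∈ Cf, ‖∑ l ∈ Cf.erase m, a (m - l) * b l‖ ^ 2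
      ≤ (A * Real.sqrt (∑ l ∈ Cf, ‖b l‖ ^ 2)) ^ 2 := by
    have h1 : ∑ m ∈ Cf, ‖∑ l ∈ Cf.erase m, a (m - l) * b l‖ ^ 2
        ≤ A * (A * ∑ l ∈ Cf, ‖b l‖ ^ 2) := by
      calc ∑ m ∈ Cf, ‖∑ l ∈ Cf.erase m, a (m - l) * b l‖ ^ 2
          ≤ ∑ m ∈ Cf, A * ∑ l ∈ Cf.erase m, w (m - l) * ‖b l‖ ^ 2 :=
            Finset.sum_le_sum hterm
        _ = A * ∑ m ∈ Cf, ∑ l ∈ Cf.erase m, w (m - l) * ‖b l‖ ^ 2 :=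
            (Finset.mul_sum _ _ _).symm
        _ ≤ A * (A * ∑ l ∈ Cf, ‖b l‖ ^ 2) := mul_le_mul_of_nonneg_left hswap hA0
    calc ∑ m ∈ Cf, ‖∑ l ∈ Cf.erase m, a (m - l) * b l‖ ^ 2
        ≤ A * (A * ∑ l ∈ Cf, ‖b l‖ ^ 2) := h1
      _ = (A * Real.sqrt (∑ l ∈ Cf, ‖b l‖ ^ 2)) ^ 2 := by
          rw [mul_pow, Real.sq_sqrt hB2nn]; ring
  rw [hLHS, hB2]
  calc Real.sqrt (∑ m ∈ Cf, ‖∑ l ∈ Cf.erase m, a (m - l) * b l‖ ^ 2)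
      ≤ Real.sqrt ((A * Real.sqrt (∑ l ∈ Cf, ‖b l‖ ^ 2)) ^ 2) := Real.sqrt_le_sqrt hmain
    _ = A * Real.sqrt (∑ l ∈ Cf, ‖b l‖ ^ 2) :=
        Real.sqrt_sq (mul_nonneg hA0 (Real.sqrt_nonneg _))
end

section
/- Let λ₁, λ_N, μ, α₋, α₊ > 0 with α₋ ≤ α₊ and L ≥ 0. Then there exists ε₀ > 0, depending only on λ₁, λ_N, L, μ, α₊, such that the following holds. Let S < T, let p, q : [S,T] → ℝ be differentiable nonnegative functions, let n : [S,T] → ℝ satisfy n(t) ≥ λ₁ (p(t) + q(t)) for all t, and let α : [S,T] → ℝ satisfy α₋ ≤ α(t) ≤ α₊ for all t. Assume that for all t ∈ [S,T]: (q − p)'(t) + α(t)(q(t) − p(t)) ≤ −μ n(t), (p + q)'(t) ≤ 2L n(t), and −p'(t) ≤ 2(λ_N + L) n(t). Then for every ε ∈ (0, ε₀) and all t ∈ [S,T]: (q − p + ε(p + q))'(t) + (α(t) + (1/2)λ₁μ)(q − p + ε(p + q))(t) ≤ 0 and (q − p − ε(p + q))'(t) + (α(t) − (1/2)λ₁μ)(q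 − p − ε(p + q))(t) ≤ 0. -/
/-!
The strong cone inequality leaves a margin `μ n` in `V' + α V ≤ 0`. Since `|q - p| ≤ p + q ≤ n / λ₁`,
half of that margin pays for shifting the rate `α` by `± λ₁ μ / 2`; the other half absorbs the
`ε`-perturbation, whose size is controlled by the energy inequalities once `ε` is small. For `V_{-ε}`
one writes `-ε (p + q)' = -ε (q - p)' - 2 ε p'`, uses `1 - ε` times the cone inequality, and bounds
`-p'` by the second energy inequality; what is left, `-2 ε α p`, is nonpositive.
-/

theorem perturbed_cone_ineq_add {lam1 mu ahi b ε P Q P' Q' N A : ℝ}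
    (hlam1 : 0 < lam1) (hmu : 0 ≤ mu) (hP : 0 ≤ P) (hQ : 0 ≤ Q) (hN : lam1 * (P + Q) ≤ N)
    (hA₀ : 0 ≤ A) (hA : A ≤ ahi)
    (hcone : (Q' - P') + A * (Q - P) ≤ -mu * N) (hgrowth : P' + Q' ≤ b * N)
    (hε : 0 ≤ ε) (hεsmall : ε * (lam1 * b + ahi + lam1 * mu / 2) ≤ lam1 * mu / 2) :
    ((Q' - P') + ε * (P' + Q')) + (A + 1 / 2 * lam1 * mu) * ((Q - P) + ε * (P + Q)) ≤ 0 := by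
  have hN₀ : 0 ≤ N := le_trans (by positivity) hN
  have hdiff : lam1 * (Q - P) ≤ N := by linarith [mul_nonneg hlam1.le hP]
  have hahi : 0 ≤ ahi + lam1 * mu / 2 := by linarith [mul_nonneg hlam1.le hmu]
  refine nonpos_of_mul_nonpos_right ?_ hlam1
  linear_combination lam1 * hcone + (lam1 * ε) * hgrowth + (lam1 * mu / 2) * hdiff
    + (ε * lam1 * (P + Q)) * hA + (ε * (ahi + lam1 * mu / 2)) * hN + N * hεsmall

theorem perturbed_cone_ineq_sub {lam1 mu c ε P Q P' Q' N A : ℝ}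
    (hlam1 : 0 ≤ lam1) (hmu : 0 < mu) (hc : 0 ≤ c) (hP : 0 ≤ P) (hQ : 0 ≤ Q)
    (hN : lam1 * (P + Q) ≤ N) (hA₀ : 0 ≤ A)
    (hcone : (Q' - P') + A * (Q - P) ≤ -mu * N) (hdecay : -P' ≤ c * N)
    (hε : 0 ≤ ε) (hεsmall : ε * (3 / 2 * mu + 2 * c) ≤ mu / 2) :
    ((Q' - P') - ε * (P' + Q')) + (A - 1 / 2 * lam1 * mu) * ((Q - P) - ε * (P + Q)) ≤ 0 := by
  have hN₀ : 0 ≤ N := le_trans (by positivity) hN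
  have hdiff : lam1 * (P - Q) ≤ N := by linarith [mul_nonneg hlam1 hQ]
  have hε₁ : ε ≤ 1 := by nlinarith [mul_nonneg hε hc]
  linear_combination (1 - ε) * hcone + (2 * ε) * hdecay + (2 * ε * P) * hA₀
    + (mu / 2) * hdiff + (ε * mu / 2) * hN + N * hεsmall

open Set in
theorem strong_cone_robustness_general (lam1 lamN mu alo ahi L : ℝ)
    (hlam1 : 0 < lam1) (hlamN : 0 < lamN) (hmu : 0 < mu)
    (halo : 0 < alo) (hahi : 0 < ahi) (hL : 0 ≤ L) :
    ∃ ε₀ : ℝ, 0 < ε₀ ∧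
      ∀ (S T : ℝ), S < T →
      ∀ (p q p' q' n α : ℝ → ℝ),
        (∀ t ∈ Icc S T, HasDerivWithinAt p (p' t) (Icc S T) t) →
        (∀ t ∈ Icc S T, HasDerivWithinAt q (q' t) (Icc S T) t) →
        (∀ t ∈ Icc S T, 0 ≤ p t) →
        (∀ t ∈ Icc S T, 0 ≤ q t) →
        (∀ t ∈ Icc S T, lam1 * (p t + q t) ≤ n t) →
        (∀ t ∈ Icc S T, alo ≤ α t ∧ α t ≤ ahi) →
        (∀ t ∈ Icc S T, (q' t - p' t) + α t * (q t - p t) ≤ -mu * n t) →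
        (∀ t ∈ Icc S T, p' t + q' t ≤ 2 * L * n t) →
        (∀ t ∈ Icc S T, -p' t ≤ 2 * (lamN + L) * n t) →
        ∀ ε : ℝ, 0 < ε → ε < ε₀ → ∀ t ∈ Icc S T,
          ((q' t - p' t) + ε * (p' t + q' t))
              + (α t + (1 / 2) * lam1 * mu) * ((q t - p t) + ε * (p t + q t)) ≤ 0
          ∧
          ((q' t - p' t) - ε * (p' t + q' t))
              + (α t - (1 / 2) * lam1 * mu) * ((q t - p t) - ε * (p t + q t)) ≤ 0 := by
  have hc : 0 ≤ 2 * (lamN + L) := by positivity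
  have hD₁ : 0 < lam1 * (2 * L) + ahi + lam1 * mu / 2 := by positivity
  have hD₂ : 0 < 3 / 2 * mu + 2 * (2 * (lamN + L)) := by positivity
  refine ⟨min (lam1 * mu / 2 / (lam1 * (2 * L) + ahi + lam1 * mu / 2))
    (mu / 2 / (3 / 2 * mu + 2 * (2 * (lamN + L)))), by positivity, ?_⟩
  intro S T _ p q p' q' n α _ _ hp hq hn hα hcone hgrowth hdecay ε hε hεlt t ht
  have hα₀ : 0 ≤ α t := halo.le.trans (hα t ht).1
  exact ⟨perturbed_cone_ineq_add hlam1 hmu.le (hp t ht) (hq t ht) (hn t ht) hα₀ (hα t ht).2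
      (hcone t ht) (hgrowth t ht) hε.le
      ((lt_div_iff₀ hD₁).1 (hεlt.trans_le (min_le_left _ _))).le,
    perturbed_cone_ineq_sub hlam1.le hmu hc (hp t ht) (hq t ht) (hn t ht) hα₀
      (hcone t ht) (hdecay t ht) hε.le
      ((lt_div_iff₀ hD₂).1 (hεlt.trans_le (min_le_right _ _))).le⟩

open Set in
/-- Robustness of the strong cone condition (normal hyperbolicity of the cone
family): there is `ε₀ > 0`, depending only on `λ₁, λ_N, L, μ, α₊`, such that if
`p = ‖P_N v‖²_{H^{-1}}`, `q = ‖Q_N v‖²_{H^{-1}}`, `n = ‖v‖²_H` satisfy the strong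
cone inequality and the two auxiliary energy inequalities, then for every
`ε ∈ (0, ε₀)` the perturbed forms `V_{±ε} = q − p ± ε(p + q)` satisfy
`V_ε' + (α + λ₁μ/2)V_ε ≤ 0` and `V_{−ε}' + (α − λ₁μ/2)V_{−ε} ≤ 0`. -/
theorem strong_cone_robustness (lam1 lamN mu alo ahi L : ℝ)
    (hlam1 : 0 < lam1) (hlamN : 0 < lamN) (hmu : 0 < mu)
    (halo : 0 < alo) (hahi : 0 < ahi) (hle : alo ≤ ahi) (hL : 0 ≤ L) :
    ∃ ε₀ : ℝ, 0 < ε₀ ∧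
      ∀ (S T : ℝ), S < T →
      ∀ (p q p' q' n α : ℝ → ℝ),
        (∀ t ∈ Icc S T, HasDerivWithinAt p (p' t) (Icc S T) t) →
        (∀ t ∈ Icc S T, HasDerivWithinAt q (q' t) (Icc S T) t) →
        (∀ t ∈ Icc S T, 0 ≤ p t) →
        (∀ t ∈ Icc S T, 0 ≤ q t) →
        (∀ t ∈ Icc S T, lam1 * (p t + q t) ≤ n t) →
        (∀ t ∈ Icc S T, alo ≤ α t ∧ α t ≤ ahi) →
        (∀ t ∈ Icc S T, (q' t - p' t) + α t * (q t - p t) ≤ -mu * n t) →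
        (∀ t ∈ Icc S T, p' t + q' t ≤ 2 * L * n t) →
        (∀ t ∈ Icc S T, -p' t ≤ 2 * (lamN + L) * n t) →
        ∀ ε : ℝ, 0 < ε → ε < ε₀ → ∀ t ∈ Icc S T,
          ((q' t - p' t) + ε * (p' t + q' t))
              + (α t + (1 / 2) * lam1 * mu) * ((q t - p t) + ε * (p t + q t)) ≤ 0
          ∧
          ((q' t - p' t) - ε * (p' t + q' t))
              + (α t - (1 / 2) * lam1 * mu) * ((q t - p t) - ε * (p t + q t)) ≤ 0 :=
  strong_cone_robustness_general lam1 lamN mu alo ahi L hlam1 hlamN hmu halo hahi hL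
end
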